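/- arXiv:1409.7530 — 11 statements merged into one kernel-verified Lean document; each statement's English description precedes it below -/
import Mathlib

section
/- For every prime p and every i ≥ 0, the set I_i ⊆ R defined by I_0 = R and I_i = {r ∈ R : r^p ∈ p·I_{i-1}} is an ideal of R. -/
/-- The recursively defined sets `I_i`: `I_0 = R`, `I_{i+1} = {r | r^p ∈ p • I_i}`. -/
def WittI (p : ℕ) {R : Type*} [CommRing R] : ℕ → Set R
  | 0 => Set.univ
  | i + 1 => {r : R | ∃ x ∈ WittI p i, r ^ p = (p : R) * x}

/-!
The sets `I_i` decrease, so `I_{i+1} = {r ∈ I_i | r^p ∈ p I_i}`. For an ideal `J` the set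
`{r ∈ J | r^p ∈ p J}` is again an ideal: additivity comes from
`(a + b)^p = a^p + b^p + p a b c`, whose correction term lies in `J` because `a` does.
-/

namespace Ideal

variable {R : Type*} [CommRing R] {p : ℕ}

def pthRootsOfPMul (hp : p.Prime) (J : Ideal R) : Ideal R where
  carrier := {r | r ∈ J ∧ ∃ x ∈ J, r ^ p = p * x}
  zero_mem' := ⟨J.zero_mem, 0, J.zero_mem, by rw [zero_pow hp.ne_zero, mul_zero]⟩
  add_mem' := by
    rintro a b ⟨haJ, x, hxJ, hax⟩ ⟨hbJ, y, hyJ, hby⟩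
    obtain ⟨c, hc⟩ := exists_add_pow_prime_eq hp a b
    refine ⟨J.add_mem haJ hbJ, x + y + a * b * c, ?_, ?_⟩
    · exact J.add_mem (J.add_mem hxJ hyJ) (J.mul_mem_right c (J.mul_mem_right b haJ))
    · rw [hc, hax, hby]; ring
  smul_mem' := by
    rintro c a ⟨haJ, x, hxJ, hax⟩
    refine ⟨J.mul_mem_left c haJ, c ^ p * x, J.mul_mem_left _ hxJ, ?_⟩
    rw [smul_eq_mul, mul_pow, hax, mul_left_comm]

theorem mem_pthRootsOfPMul {hp : p.Prime} {J : Ideal R} {r : R} :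
    r ∈ J.pthRootsOfPMul hp ↔ r ∈ J ∧ ∃ x ∈ J, r ^ p = p * x :=
  Iff.rfl

end Ideal

section WittI

variable (p : ℕ) {R : Type*} [CommRing R]

theorem WittI_succ_subset (i : ℕ) : (WittI p (i + 1) : Set R) ⊆ WittI p i := by
  induction i with
  | zero => exact Set.subset_univ _
  | succ i ih =>
    rintro r ⟨x, hx, hr⟩
    exact ⟨x, ih hx, hr⟩

def wittIdeal (hp : p.Prime) (R : Type*) [CommRing R] : ℕ → Ideal R
  | 0 => ⊤
  | i + 1 => (wittIdeal hp R i).pthRootsOfPMul hp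

theorem coe_wittIdeal (hp : p.Prime) (i : ℕ) : (wittIdeal p hp R i : Set R) = WittI p i := by
  induction i with
  | zero => rfl
  | succ i ih =>
    ext r
    have hmem : ∀ s, s ∈ wittIdeal p hp R i ↔ s ∈ WittI p i := fun s => by rw [← ih]; rfl
    simp only [wittIdeal, SetLike.mem_coe, Ideal.mem_pthRootsOfPMul, hmem]
    exact ⟨fun ⟨_, h⟩ => h, fun h => ⟨WittI_succ_subset p i h, h⟩⟩

end WittI

theorem stmt_0 (p : ℕ) (hp : p.Prime) (R : Type*) [CommRing R] (i : ℕ) :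
    ∃ J : Ideal R, (J : Set R) = WittI p i :=
  ⟨wittIdeal p hp R i, coe_wittIdeal p hp i⟩
end

section
/- In the ring of p-typical Witt vectors W(ℤ/p²ℤ), the element p (i.e., p times the identity) equals [p] + V([(-1)^{p-1}]), i.e., its Witt components are (p, (-1)^{p-1}, 0, 0, …). -/
/-!
Work in `W(ℤ)` and reduce coordinatewise modulo `p²`. The difference `d = p - ([p] + V[(-1)^(p-1)])`
has ghost components `w₀ = 0` and `w_{n+1} = p - p^(p^(n+1)) - p·(-1)^((p-1)pⁿ)`. The sign is `+1`
except for `p = 2, n = 0`, where `w₁ = 2 - 4 + 2 = 0`; hence `p^(n+2) ∣ wₙ` for all `n`. Solving the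
ghost equations `pⁿ dₙ = wₙ - Σ_{i<n} pⁱ dᵢ^(p^(n-i))` inductively then gives `p² ∣ dₙ`, so `d`
vanishes in `W(ℤ/p²ℤ)`.
-/

open Finset

namespace WittVector

variable {p : ℕ} [Fact p.Prime]

lemma pow_dvd_coeff_of_pow_dvd_ghostComponent {x : WittVector p ℤ} {k : ℕ}
    (hx : ∀ n, (p : ℤ) ^ (n + k) ∣ ghostComponent n x) (n : ℕ) : (p : ℤ) ^ k ∣ x.coeff n := by
  rcases Nat.eq_zero_or_pos k with rfl | hk
  · simp
  induction n using Nat.strong_induction_on with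
  | _ n ih =>
  have hp : 1 < p := (Fact.out : p.Prime).one_lt
  have hlower : (p : ℤ) ^ (n + k) ∣ ∑ i ∈ range n, (p : ℤ) ^ i * x.coeff i ^ p ^ (n - i) := by
    refine dvd_sum fun i hi => ?_
    have hi : i < n := mem_range.mp hi
    have hexp : n + k ≤ i + k * p ^ (n - i) := by
      have := Nat.lt_pow_self (n := n - i) hp
      nlinarith [Nat.sub_add_cancel hi.le]
    refine (pow_dvd_pow _ hexp).trans ?_
    rw [pow_add, pow_mul]
    exact mul_dvd_mul_left _ (pow_dvd_pow_of_dvd (ih i hi) _)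
  have htop : (p : ℤ) ^ n * (p : ℤ) ^ k ∣ (p : ℤ) ^ n * x.coeff n := by
    have hghost := hx n
    rw [ghostComponent_apply, aeval_wittPolynomial, sum_range_succ, Nat.sub_self, pow_zero,
      pow_one] at hghost
    rw [← pow_add]
    simpa using (dvd_sub hghost hlower)
  exact (mul_dvd_mul_iff_left (pow_ne_zero n (by exact_mod_cast hp.ne_bot))).mp htop

lemma map_eq_zero_of_pow_dvd_ghostComponent {x : WittVector p ℤ} {k : ℕ}
    (hx : ∀ n, (p : ℤ) ^ (n + k) ∣ ghostComponent n x) :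
    map (Int.castRingHom (ZMod (p ^ k))) x = 0 := by
  ext n
  simpa [ZMod.intCast_zmod_eq_zero_iff_dvd] using pow_dvd_coeff_of_pow_dvd_ghostComponent hx n

lemma pow_dvd_ghostComponent_natCast_sub (n : ℕ) :
    (p : ℤ) ^ (n + 2) ∣ ghostComponent n ((p : WittVector p ℤ) -
      (teichmuller p (p : ℤ) + verschiebung (teichmuller p ((-1) ^ (p - 1))))) := by
  have hp : p.Prime := Fact.out
  rcases n with _ | n
  · simp [ghostComponent_zero_verschiebung, ghostComponent_teichmuller]
  simp only [map_sub, map_add, map_natCast, ghostComponent_teichmuller,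
    ghostComponent_verschiebung, ← pow_mul]
  by_cases hsmall : p = 2 ∧ n = 0
  · obtain ⟨rfl, rfl⟩ := hsmall
    norm_num
  have hexp : n + 1 + 2 ≤ p ^ (n + 1) := by
    have hpow := Nat.lt_pow_self (n := n) hp.one_lt
    have hcases : 3 ≤ p ∨ 1 ≤ n := by have := hp.two_le; omega
    rw [pow_succ]
    rcases hcases with h | h <;> nlinarith [hp.two_le]
  have hsign : Even ((p - 1) * p ^ n) := by
    rcases hp.eq_two_or_odd' with rfl | hodd
    · exact (Nat.even_pow.mpr ⟨even_two, by omega⟩).mul_left _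
    · exact (Nat.Odd.sub_odd hodd odd_one).mul_right _
  rw [hsign.neg_one_pow, mul_one, sub_add_cancel_right, dvd_neg]
  exact pow_dvd_pow _ hexp

end WittVector

open WittVector in
theorem stmt_3 (p : ℕ) [Fact p.Prime] :
    (p : WittVector p (ZMod (p ^ 2))) =
      WittVector.teichmuller p (p : ZMod (p ^ 2)) +
        WittVector.verschiebung (WittVector.teichmuller p ((-1 : ZMod (p ^ 2)) ^ (p - 1))) := by
  set y : WittVector p ℤ := teichmuller p (p : ℤ) + verschiebung (teichmuller p ((-1) ^ (p - 1)))
  have hdiff : map (Int.castRingHom (ZMod (p ^ 2))) ((p : WittVector p ℤ) - y) = 0 :=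
    map_eq_zero_of_pow_dvd_ghostComponent pow_dvd_ghostComponent_natCast_sub
  calc (p : WittVector p (ZMod (p ^ 2)))
      = map (Int.castRingHom (ZMod (p ^ 2))) (y + ((p : WittVector p ℤ) - y)) := by
        rw [add_sub_cancel, map_natCast]
    _ = _ := by
        rw [map_add, hdiff, add_zero]
        simp [y, map_teichmuller, map_verschiebung]
end

section
/- Let R be a commutative ring of characteristic p. The Witt vector Frobenius F: W(R) → W(R) is surjective if and only if the Frobenius endomorphism r ↦ r^p of R is surjective. -/
theorem stmt_6 (p : ℕ) [Fact p.Prime] (R : Type*) [CommRing R] [CharP R p] :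
    Function.Surjective
        (WittVector.frobenius : WittVector p R →+* WittVector p R) ↔
      Function.Surjective (fun r : R => r ^ p) := by
  have : (WittVector.frobenius : WittVector p R →+* WittVector p R) =
      WittVector.map (frobenius R p) := by
    exact WittVector.frobenius_eq_map_frobenius (p := p)
  rw [this]
  constructor
  · intro h r
    obtain ⟨x, hx⟩ := h (WittVector.mk p fun _ => r)
    refine ⟨x.coeff 0, ?_⟩
    have := congrArg (fun w : WittVector p R => w.coeff 0) hx
    simpa [WittVector.map_coeff, frobenius_def] using this
  · intro h x
    choose g hg using h
    refine ⟨WittVector.mk p fun n => g (x.coeff n), ?_⟩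
    apply WittVector.ext
    intro n
    simp only [WittVector.map_coeff]
    simpa [frobenius_def] using hg (x.coeff n)
end

section
/- Let R be a commutative ring of characteristic p. The Witt vector Frobenius F: W(R) → W(R) is injective if and only if R is reduced. -/
/-! In characteristic `p` the Witt vector Frobenius is `W(φ)` for the Frobenius `φ` of `R`, and
`W(f)` is injective exactly when `f` is (test it on Teichmüller representatives). Finally `φ` is
injective iff `R` has no nonzero `x` with `x ^ p ^ n = 0`, i.e. iff `R` is reduced. -/

open Function

theorem WittVector.map_injective_iff {p : ℕ} [Fact p.Prime] {R S : Type*} [CommRing R]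
    [CommRing S] (f : R →+* S) : Injective (map f : WittVector p R → WittVector p S) ↔ Injective f := by
  refine ⟨fun h x y hxy => ?_, map_injective f⟩
  have : teichmuller p x = teichmuller p y :=
    h (by rw [map_teichmuller, map_teichmuller, hxy])
  simpa using congrArg (coeff · 0) this

theorem injective_frobenius_iff_isReduced (R : Type*) [CommRing R] (p : ℕ) [Fact p.Prime]
    [CharP R p] : Injective (frobenius R p) ↔ IsReduced R := by
  refine ⟨fun h => ?_, fun _ => frobenius_inj R p⟩
  rw [← nilradical_eq_bot_iff, ← pNilradical_eq_nilradical (Fact.out : p.Prime).one_lt]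
  exact pNilradical_eq_bot_of_frobenius_inj R p h

theorem stmt_7 (p : ℕ) [Fact p.Prime] (R : Type*) [CommRing R] [CharP R p] :
    Function.Injective
        (WittVector.frobenius : WittVector p R →+* WittVector p R) ↔
      IsReduced R := by
  rw [WittVector.frobenius_eq_map_frobenius, WittVector.map_injective_iff,
    injective_frobenius_iff_isReduced]
end

section
/- Suppose that for every r ∈ R there exists s ∈ R with s^p ≡ r (mod pR) (condition (xx)), and there exist r, s ∈ R with r^p ≡ -p (mod p·s·R) and s^N ∈ pR for some integer N > 0 (condition (xix)). Then for every r ∈ R there exists s ∈ R such that s^p ≡ p·r (mod p²R) (condition (xvii)). -/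
theorem stmt_8 (p : ℕ) (hp : p.Prime) (R : Type*) [CommRing R]
    (hxx : ∀ r : R, ∃ s : R, (p : R) ∣ s ^ p - r)
    (hxix : ∃ r s : R, (p : R) * s ∣ r ^ p + p ∧ ∃ N : ℕ, 0 < N ∧ (p : R) ∣ s ^ N) :
    ∀ r : R, ∃ s : R, ((p : R) ^ 2) ∣ s ^ p - p * r := by
  obtain ⟨a, b, ⟨c, hc⟩, N, hN, d, hd⟩ := hxix
  intro r
  set x : R := b * c with hx
  set S : R := ∑ k ∈ Finset.range N, x ^ k with hS
  have hg : S * (x - 1) = x ^ N - 1 := geom_sum_mul x N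
  obtain ⟨t, e, he⟩ := hxx (r * (-S))
  exact ⟨a * t, -r * d * c ^ N + (x - 1) * e, by
    linear_combination (t ^ p) * hc + ((p : R) * (x - 1)) * he +
      (-(p : R) * r) * hg + (-(p : R) * r * c ^ N) * hd⟩
end

section
/- If the p-th power map on R/pR is surjective, then for every r ∈ R and every n ≥ 1 there exist r_1, …, r_{p^n} ∈ R such that r = Σ_{i=0}^{n} p^i · r_{p^i}^{p^{n-i}}; that is, every element of R is a ghost component value w_{p^n} of a Witt vector, so the composite F^n: W_{p^n}(R) → W_1(R) = R is surjective for all n. -/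
theorem aux_pk_root (p : ℕ) (R : Type*) [CommRing R]
    (h : ∀ r : R, ∃ s : R, (p : R) ∣ s ^ p - r) :
    ∀ (k : ℕ) (r : R), ∃ s c : R, r = s ^ p ^ k + p * c := by
  intro k
  induction k with
  | zero => intro r; exact ⟨r, 0, by simp⟩
  | succ k ih =>
    intro r
    obtain ⟨s, c, hs⟩ := ih r
    obtain ⟨t, d, ht⟩ := h s
    have h1 : (p : R) ∣ s - t ^ p := ⟨-d, by linear_combination -ht⟩
    have h2 : (p : R) ∣ s ^ p ^ k - (t ^ p) ^ p ^ k :=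
      h1.trans (sub_dvd_pow_sub_pow s (t ^ p) (p ^ k))
    obtain ⟨e, he⟩ := h2
    refine ⟨t, e + c, ?_⟩
    have : (t ^ p) ^ p ^ k = t ^ p ^ (k + 1) := by
      rw [← pow_mul, pow_succ, mul_comm (p ^ k) p]
    linear_combination hs + he - this

theorem stmt_9 (p : ℕ) (hp : p.Prime) (R : Type*) [CommRing R]
    (h : ∀ r : R, ∃ s : R, (p : R) ∣ s ^ p - r) :
    ∀ (r : R) (n : ℕ), 1 ≤ n →
      ∃ f : ℕ → R, r = ∑ i ∈ Finset.range (n + 1), (p : R) ^ i * f i ^ p ^ (n - i) := by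
  suffices H : ∀ (n : ℕ) (r : R),
      ∃ f : ℕ → R, r = ∑ i ∈ Finset.range (n + 1), (p : R) ^ i * f i ^ p ^ (n - i) by
    intro r n _; exact H n r
  intro n
  induction n with
  | zero => intro r; exact ⟨fun _ => r, by simp⟩
  | succ n ih =>
    intro r
    obtain ⟨s, c, hsc⟩ := aux_pk_root p R h (n + 1) r
    obtain ⟨g, hg⟩ := ih c
    refine ⟨fun i => match i with | 0 => s | j + 1 => g j, ?_⟩
    rw [Finset.sum_range_succ']
    have : ∀ i ∈ Finset.range (n + 1),
        (p : R) ^ (i + 1) * ((fun i => match i with | 0 => s | j + 1 => g j) (i + 1) : R)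
            ^ p ^ (n + 1 - (i + 1))
          = (p : R) * ((p : R) ^ i * g i ^ p ^ (n - i)) := by
      intro i hi
      simp only [Nat.succ_sub_succ]
      ring
    rw [Finset.sum_congr rfl this, ← Finset.mul_sum, ← hg, hsc]
    simp only [pow_zero, one_mul, Nat.sub_zero]
    ring
end

section
/- Let R be a valuation ring with real-valued valuation v in which p ≠ 0, and suppose: (1) the Frobenius on R/pR is surjective, and (2) R satisfies: there exist r, s ∈ R with r^p ≡ -p (mod p·s·R) and s^p ∈ pR. Then there exists w ∈ R with w^p ≡ -p (mod p²R). -/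
theorem stmt_12 (p : ℕ) (hp : p.Prime) (R : Type*) [CommRing R] [IsDomain R]
    [ValuationRing R] (v : Valuation R NNReal) (hp0 : (p : R) ≠ 0)
    (hfrob : ∀ r : R, ∃ s : R, (p : R) ∣ s ^ p - r)
    (hxix : ∃ r s : R, (p : R) * s ∣ r ^ p + p ∧ (p : R) ∣ s ^ p) :
    ∃ w : R, ((p : R) ^ 2) ∣ w ^ p + p := by
  by_cases hpu : IsUnit (p : R)
  · -- If p is a unit, w = 0 works.
    obtain ⟨u, hu⟩ := hpu
    refine ⟨0, (↑u⁻¹ : R), ?_⟩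
    have h0 : (0 : R) ^ p = 0 := zero_pow hp.pos.ne'
    rw [h0, zero_add]
    have : ((p : R) * ↑u⁻¹) = 1 := by rw [← hu, Units.mul_inv]
    calc (p : R) = (p : R) * ((p:R) * ↑u⁻¹) := by rw [this, mul_one]
      _ = (p : R) ^ 2 * ↑u⁻¹ := by ring
  · obtain ⟨r, s, hrs, hsp⟩ := hxix
    obtain ⟨t, ht⟩ := hrs
    -- σ := s * t ; r^p + p = p * σ
    set σ : R := s * t with hσdef
    have hrp : r ^ p + (p : R) = (p : R) * σ := by rw [ht]; ring
    -- σ is not a unit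
    have hσnu : ¬ IsUnit σ := by
      intro hσu
      exact hpu (isUnit_of_dvd_unit (by
        obtain ⟨c, hc⟩ := hsp
        exact ⟨c * t ^ p, by rw [hσdef, mul_pow, hc]; ring⟩) (hσu.pow p))
    have hunit : IsUnit (1 - σ) :=
      IsLocalRing.isUnit_one_sub_self_of_mem_nonunits σ hσnu
    obtain ⟨e, he⟩ := hunit
    have hc : (1 - σ) * (↑e⁻¹ : R) = 1 := by rw [← he, Units.mul_inv]
    obtain ⟨g, B, hB⟩ : ∃ g B : R, g ^ p - σ * (↑e⁻¹ : R) = (p : R) * B := by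
      obtain ⟨g, B, hB⟩ := hfrob (σ * (↑e⁻¹ : R))
      exact ⟨g, B, hB⟩
    obtain ⟨A, hA⟩ := exists_add_pow_prime_eq hp (1 : R) g
    refine ⟨r * (1 + g), (σ - 1) * (g * A + B), ?_⟩
    have hone : (1 : R) ^ p = 1 := one_pow p
    -- w^p + p = r^p * (1+g)^p + p
    have key : (r * (1 + g)) ^ p + (p : R) = (p : R) ^ 2 * ((σ - 1) * (g * A + B)) := by
      have h1 : (r * (1 + g)) ^ p = r ^ p * (1 + g) ^ p := mul_pow r (1 + g) p
      have h2 : r ^ p = (p : R) * σ - (p : R) := by linear_combination hrp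
      have hgp : g ^ p = σ * (↑e⁻¹ : R) + (p : R) * B := by linear_combination hB
      rw [h1, h2, hA, hone, hgp]
      linear_combination (-(p : R) * σ) * hc
    exact key
end

section
/- For p an odd prime, n ≥ 2 an integer, and ζ a primitive p^n-th root of unity, in ℤ[ζ] one has (1-ζ)^{p^n - p^{n-1}} ≡ -p (mod (1-ζ)^{p^n}). -/
/-!
Write `λ = 1 - ζ`, `m = p^(n-1)` and `η = ζ^m`, a primitive `p`-th root of unity. Since
`p = ∏ (1 - μ)` over the primitive `p^n`-th roots `μ`, `λ^(φ(p^n))` divides `p`. Expanding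
`(1 - λ)^m` gives `1 - η ≡ λ^m (mod p λ)`, hence modulo `λ^(φ(p^n) + 1)`, and raising to the
power `p - 1` gives `(1 - η)^(p-1) ≡ λ^(φ(p^n)) (mod λ^(p^n))`. As `λ^(p^n)` also divides
`(1 - η)^p`, this reduces the claim to the case `n = 1` for `η`: writing
`p = ∏_{0<k<p} (1 - η^k) = (1 - η)^(p-1) T` where `T` is a product of geometric sums,
`T ≡ (p-1)! ≡ -1 (mod 1 - η)` by Wilson's theorem, so
`(1 - η)^(p-1) + p = (1 - η)^(p-1) (1 + T)` is divisible by `(1 - η)^p`.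
-/

open Finset Polynomial
open scoped Nat

theorem mul_pow_pred_dvd_pow_sub_pow {R : Type*} [CommRing R] {a b c : R} (ha : c ∣ a)
    (hb : c ∣ b) (q : ℕ) : (a - b) * c ^ (q - 1) ∣ a ^ q - b ^ q := by
  rcases q with _ | q
  · simp
  rw [← geom_sum₂_mul, mul_comm _ (a - b), Nat.add_sub_cancel]
  refine mul_dvd_mul_left (a - b) (Finset.dvd_sum fun i hi => ?_)
  rw [← Nat.add_sub_of_le (Nat.le_of_lt_succ (mem_range.mp hi)), pow_add c,
    Nat.add_sub_cancel_left]
  exact mul_dvd_mul (pow_dvd_pow_of_dvd ha i) (pow_dvd_pow_of_dvd hb _)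

theorem natCast_mul_dvd_one_sub_pow_sub {R : Type*} [CommRing R] {p : ℕ} (hp : p.Prime)
    (hodd : p ≠ 2) (x : R) : (p : R) * x ∣ (1 - x) ^ p - (1 - x ^ p) := by
  rw [sub_eq_neg_add 1 x, add_pow_prime_eq hp, (hp.odd_of_ne_two hodd).neg_pow, one_pow]
  exact ⟨-∑ k ∈ Ioo 0 p, (-x) ^ (k - 1) * 1 ^ (p - k - 1) * (p.choose k / p : ℕ), by ring⟩

theorem natCast_mul_dvd_one_sub_pow_prime_pow_sub {R : Type*} [CommRing R] {p : ℕ}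
    (hp : p.Prime) (hodd : p ≠ 2) (x : R) (j : ℕ) :
    (p : R) * x ∣ (1 - x) ^ p ^ j - (1 - x ^ p ^ j) := by
  induction j with
  | zero => simp
  | succ j ih =>
    have hstep : (p : R) * x ∣ (1 - x ^ p ^ j) ^ p - (1 - (x ^ p ^ j) ^ p) :=
      (mul_dvd_mul_left _ (dvd_pow_self x (pow_ne_zero j hp.ne_zero))).trans
        (natCast_mul_dvd_one_sub_pow_sub hp hodd _)
    rw [pow_succ, pow_mul, pow_mul, ← sub_add_sub_cancel _ ((1 - x ^ p ^ j) ^ p)]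
    exact dvd_add (ih.trans (sub_dvd_pow_sub_pow _ _ p)) hstep

theorem Nat.Prime.dvd_factorial_sub_one_add_one {p : ℕ} (hp : p.Prime) : p ∣ (p - 1)! + 1 := by
  have := Fact.mk hp
  rw [← ZMod.natCast_eq_zero_iff, Nat.cast_add, ZMod.wilsons_lemma, Nat.cast_one, neg_add_cancel]

namespace IsPrimitiveRoot

variable {R : Type*} [CommRing R] [IsDomain R]

theorem one_sub_pow_totient_dvd_eval_one_cyclotomic {ζ : R} {N : ℕ}
    (hζ : IsPrimitiveRoot ζ N) : (1 - ζ) ^ N.totient ∣ (cyclotomic N R).eval 1 := by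
  rcases N.eq_zero_or_pos with rfl | hN
  · simp
  have : NeZero N := ⟨hN.ne'⟩
  rw [cyclotomic_eq_prod_X_sub_primitiveRoots hζ, eval_prod, ← hζ.card_primitiveRoots,
    ← prod_const]
  refine prod_dvd_prod_of_dvd _ _ fun μ hμ => ?_
  obtain ⟨i, -, rfl⟩ := hζ.eq_pow_of_pow_eq_one ((mem_primitiveRoots hN).mp hμ).pow_eq_one
  refine ⟨∑ j ∈ range i, ζ ^ j, ?_⟩
  simp only [eval_sub, eval_X, eval_C]
  linear_combination geom_sum_mul ζ i

theorem one_sub_pow_dvd_one_sub_pow_pred_add {p : ℕ} (hp : p.Prime) {η : R}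
    (hη : IsPrimitiveRoot η p) : (1 - η) ^ p ∣ (1 - η) ^ (p - 1) + p := by
  obtain ⟨q, rfl⟩ : ∃ q, p = q + 1 := ⟨p - 1, (Nat.sub_add_cancel hp.one_le).symm⟩
  rw [Nat.add_sub_cancel]
  set T := ∏ k ∈ range q, ∑ i ∈ range (k + 1), η ^ i
  have hpT : ((q + 1 : ℕ) : R) = (1 - η) ^ q * T := by
    rw [Nat.cast_succ, ← hη.prod_one_sub_pow_eq_order]
    simp only [T, ← mul_neg_geom_sum, prod_mul_distrib, prod_const, card_range]
  have hT : 1 - η ∣ T + 1 := by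
    let f := Ideal.Quotient.mk (Ideal.span {1 - η})
    have hf (r : R) : 1 - η ∣ r ↔ f r = 0 := by
      rw [Ideal.Quotient.eq_zero_iff_mem, Ideal.mem_span_singleton]
    have hfη : f η = 1 := by
      rw [eq_comm, ← sub_eq_zero, ← map_one f, ← map_sub, ← hf]
    have hfp : ((q + 1 : ℕ) : R ⧸ Ideal.span {1 - η}) = 0 := by
      rw [← map_natCast f, ← hf, hpT]
      exact dvd_mul_of_dvd_left (dvd_pow_self _ (by have := hp.two_le; omega)) T
    obtain ⟨c, hc⟩ := hp.dvd_factorial_sub_one_add_one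
    rw [Nat.add_sub_cancel] at hc
    rw [hf, map_add, map_one, map_prod]
    simp only [map_sum, map_pow, hfη, one_pow, sum_const, card_range, nsmul_one]
    rw [← Nat.cast_prod, prod_range_add_one_eq_factorial, ← Nat.cast_add_one, hc, Nat.cast_mul,
      hfp, zero_mul]
  calc (1 - η) ^ (q + 1) = (1 - η) ^ q * (1 - η) := pow_succ _ _
    _ ∣ (1 - η) ^ q * (1 + T) := mul_dvd_mul_left _ (add_comm T 1 ▸ hT)
    _ = (1 - η) ^ q + (q + 1 : ℕ) := by rw [hpT]; ring

theorem one_sub_pow_dvd_natCast_prime {p k : ℕ} (hp : p.Prime) {ζ : R}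
    (hζ : IsPrimitiveRoot ζ (p ^ (k + 1))) : (1 - ζ) ^ (p ^ k * (p - 1)) ∣ (p : R) := by
  have := Fact.mk hp
  simpa only [Nat.totient_prime_pow_succ hp, eval_one_cyclotomic_prime_pow] using
    hζ.one_sub_pow_totient_dvd_eval_one_cyclotomic

theorem one_sub_pow_totient_succ_dvd_one_sub_pow_sub {p k : ℕ} (hp : p.Prime) (hodd : p ≠ 2)
    {ζ : R} (hζ : IsPrimitiveRoot ζ (p ^ (k + 1))) :
    (1 - ζ) ^ (p ^ k * (p - 1) + 1) ∣ (1 - ζ ^ p ^ k) - (1 - ζ) ^ p ^ k := by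
  have h := natCast_mul_dvd_one_sub_pow_prime_pow_sub hp hodd (1 - ζ) k
  rw [sub_sub_cancel, dvd_sub_comm, sub_right_comm] at h
  exact (pow_succ (1 - ζ) _ ▸ mul_dvd_mul_right (hζ.one_sub_pow_dvd_natCast_prime hp) _).trans h

end IsPrimitiveRoot

theorem stmt_13_general (p n : ℕ) (hp : p.Prime) (hodd : p ≠ 2) (hn : 2 ≤ n)
    (R : Type*) [CommRing R] [IsDomain R] (ζ : R)
    (hζ : IsPrimitiveRoot ζ (p ^ n)) :
    (1 - ζ) ^ p ^ n ∣ (1 - ζ) ^ (p ^ n - p ^ (n - 1)) + (p : R) := by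
  obtain ⟨k, rfl⟩ : ∃ k, n = k + 1 := ⟨n - 1, by omega⟩
  have hp3 : 3 ≤ p := hp.two_le.lt_of_ne' hodd
  set l := 1 - ζ
  set η := ζ ^ p ^ k
  have hη : (1 - η) ^ p ∣ (1 - η) ^ (p - 1) + p :=
    (hζ.pow (pow_pos hp.pos _) (pow_succ p k)).one_sub_pow_dvd_one_sub_pow_pred_add hp
  have hηl : l ^ (p ^ k * (p - 1) + 1) ∣ (1 - η) - l ^ p ^ k :=
    hζ.one_sub_pow_totient_succ_dvd_one_sub_pow_sub hp hodd
  have hlη : l ^ p ^ k ∣ 1 - η := by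
    refine dvd_sub_self_right.mp ((pow_dvd_pow l ?_).trans hηl)
    exact Nat.le_add_right_of_le (Nat.le_mul_of_pos_right _ (by omega))
  have h1 : l ^ p ^ (k + 1) ∣ (1 - η) ^ p := by
    rw [pow_succ, pow_mul]
    exact pow_dvd_pow_of_dvd hlη p
  have h2 : l ^ p ^ (k + 1) ∣ (1 - η) ^ (p - 1) - (l ^ p ^ k) ^ (p - 1) := by
    have hexp : p ^ (k + 1) ≤ p ^ k * (p - 1) + 1 + p ^ k * (p - 1 - 1) := by
      rw [pow_succ, add_right_comm, ← mul_add]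
      exact (Nat.mul_le_mul_left _ (by omega)).trans (Nat.le_add_right _ 1)
    refine (pow_dvd_pow l hexp).trans (dvd_trans ?_ (mul_pow_pred_dvd_pow_sub_pow hlη dvd_rfl _))
    rw [pow_add, ← pow_mul]
    exact mul_dvd_mul_right hηl _
  have hφ : p ^ (k + 1) - p ^ (k + 1 - 1) = p ^ k * (p - 1) := by
    rw [Nat.add_sub_cancel, pow_succ, Nat.mul_sub_one]
  rw [hφ, pow_mul, show (l ^ p ^ k) ^ (p - 1) + p
    = ((1 - η) ^ (p - 1) + p) - ((1 - η) ^ (p - 1) - (l ^ p ^ k) ^ (p - 1)) by ring]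
  exact dvd_sub (h1.trans hη) h2

theorem stmt_13 (p n : ℕ) (hp : p.Prime) (hodd : p ≠ 2) (hn : 2 ≤ n)
    (R : Type*) [CommRing R] [IsDomain R] [CharZero R] (ζ : R)
    (hζ : IsPrimitiveRoot ζ (p ^ n)) (hadj : Algebra.adjoin ℤ {ζ} = ⊤) :
    (1 - ζ) ^ p ^ n ∣ (1 - ζ) ^ (p ^ n - p ^ (n - 1)) + (p : R) :=
  stmt_13_general p n hp hodd hn R ζ hζ
end

section
/- For p an odd prime, write the p^n-th cyclotomic polynomial evaluated at 1-T as Φ(1-T) where Φ(T) = Σ_{i=0}^{p-1} T^{i·p^{n-1}}. Then for n = 2 and each k with 1 ≤ k ≤ p-1, the coefficient of T^k in Φ(1-T), namely Σ_{i=0}^{p-1} (-1)^k · binom(ip, k), is divisible by p². -/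
theorem stmt_14 (p : ℕ) (hp : p.Prime) (hodd : p ≠ 2) (k : ℕ)
    (hk1 : 1 ≤ k) (hk2 : k ≤ p - 1) :
    ((p : ℤ) ^ 2) ∣ ∑ i ∈ Finset.range p, (-1 : ℤ) ^ k * (Nat.choose (i * p) k : ℤ) := by
  have hkp : k < p := lt_of_le_of_lt hk2 (Nat.sub_lt hp.pos one_pos)
  set B : ℤ := ∏ j ∈ Finset.range (k-1), (-(j:ℤ)-1) with hB
  -- k! * choose = product
  have key : ∀ i, ((k.factorial : ℤ)) * (Nat.choose (i*p) k : ℤ)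
      = ∏ j ∈ Finset.range k, ((i*p : ℤ) - j) := by
    intro i
    rcases Nat.eq_zero_or_pos i with rfl | hi
    · rw [Finset.prod_eq_zero (Finset.mem_range.mpr (by omega : 0 < k)) (by simp)]
      simp [Nat.choose_eq_zero_of_lt (by omega : 0 < k)]
    · have hn : k ≤ i * p := le_trans hkp.le (Nat.le_mul_of_pos_left p hi)
      have := Nat.descFactorial_eq_factorial_mul_choose (i*p) k
      have hc : ((i*p).descFactorial k : ℤ) = ∏ j ∈ Finset.range k, ((i*p : ℤ) - j) := by
        rw [Nat.descFactorial_eq_prod_range]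
        push_cast [Nat.cast_prod]
        refine Finset.prod_congr rfl fun j hj => ?_
        have : j ≤ i * p := le_trans (Finset.mem_range.mp hj).le hn
        push_cast [Nat.cast_sub this]
        ring
      rw [← hc, this]
      push_cast
      ring
  -- split product
  have split : ∀ i, ∏ j ∈ Finset.range k, ((i*p : ℤ) - j)
      = (i*p : ℤ) * ∏ j ∈ Finset.range (k-1), ((i*p : ℤ) - (j+1)) := by
    intro i
    have hk : k = (k-1) + 1 := by omega
    rw [hk, Finset.prod_range_succ']
    push_cast
    ring
  -- mod p congruence of the tail product
  have tail : ∀ i, (p : ℤ) ∣ (∏ j ∈ Finset.range (k-1), ((i*p : ℤ) - (j+1))) - B := by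
    intro i
    have : ((∏ j ∈ Finset.range (k-1), ((i*p : ℤ) - (j+1)) : ℤ) : ZMod p)
        = ((B : ℤ) : ZMod p) := by
      push_cast [hB]
      refine Finset.prod_congr rfl fun j hj => ?_
      simp [ZMod.natCast_self]
      ring
    have := (ZMod.intCast_eq_intCast_iff _ _ _).mp this
    exact Int.ModEq.dvd this.symm
  -- each term congruent mod p^2
  have term : ∀ i, ((p:ℤ)^2) ∣ (∏ j ∈ Finset.range k, ((i*p : ℤ) - j)) - (i*p : ℤ) * B := by
    intro i
    rw [split i, ← mul_sub, pow_two]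
    exact mul_dvd_mul ⟨i, by ring⟩ (tail i)
  -- sum of i*p divisible by p^2
  have hsum : ((p:ℤ)^2) ∣ ∑ i ∈ Finset.range p, ((i:ℤ)*p) * B := by
    have hgauss : (∑ i ∈ Finset.range p, (i:ℕ)) * 2 = p * (p-1) := Finset.sum_range_id_mul_two p
    obtain ⟨m, hm⟩ := hp.odd_of_ne_two hodd
    have h1 : p - 1 = 2 * m := by omega
    have hS : (∑ i ∈ Finset.range p, (i:ℕ)) = p * m :=
      Nat.eq_of_mul_eq_mul_right two_pos (by rw [hgauss, h1]; ring)
    have hS' : (∑ i ∈ Finset.range p, (i:ℤ)) = (p:ℤ) * m := by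
      have := congrArg (Nat.cast : ℕ → ℤ) hS
      push_cast at this
      exact this
    have : (∑ i ∈ Finset.range p, ((i:ℤ)*p) * B) = (∑ i ∈ Finset.range p, (i:ℤ)) * p * B := by
      rw [Finset.sum_mul, Finset.sum_mul]
    rw [this, hS']
    exact ⟨(m:ℤ) * B, by ring⟩
  -- conclude: p^2 ∣ k! * Σ choose
  have main : ((p:ℤ)^2) ∣ (k.factorial : ℤ) * ∑ i ∈ Finset.range p, (Nat.choose (i*p) k : ℤ) := by
    rw [Finset.mul_sum]
    have : (∑ i ∈ Finset.range p, (k.factorial : ℤ) * (Nat.choose (i*p) k : ℤ))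
        = (∑ i ∈ Finset.range p, ((∏ j ∈ Finset.range k, ((i*p : ℤ) - j)) - (i*p:ℤ) * B))
          + ∑ i ∈ Finset.range p, ((i:ℤ)*p) * B := by
      rw [← Finset.sum_add_distrib]
      refine Finset.sum_congr rfl fun i _ => ?_
      rw [key i]; ring
    rw [this]
    exact dvd_add (Finset.dvd_sum fun i _ => term i) hsum
  have hcopf : IsCoprime ((p:ℤ)^2) ((k.factorial : ℤ)) := by
    have hnd : ¬ (p ∣ k.factorial) := fun h =>
      absurd ((Nat.Prime.dvd_factorial hp).mp h) (Nat.not_le.mpr hkp)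
    have : IsCoprime (p:ℤ) ((k.factorial : ℤ)) := by
      rw [Nat.isCoprime_iff_coprime]
      exact hp.coprime_iff_not_dvd.mpr hnd
    exact this.pow_left
  have := hcopf.dvd_of_dvd_mul_left main
  calc ((p:ℤ)^2) ∣ (-1:ℤ)^k * ∑ i ∈ Finset.range p, (Nat.choose (i*p) k : ℤ) := Dvd.dvd.mul_left this _
    _ = ∑ i ∈ Finset.range p, (-1 : ℤ) ^ k * (Nat.choose (i * p) k : ℤ) := by rw [Finset.mul_sum]
end

section
/- In the ring R = ℤ[ζ] with ζ a primitive p²-nd root of unity, the element x = Σ_{i=0}^{p-1} [ζ^i] ∈ W(R) (a sum of Teichmüller elements) satisfies F(x) = V(1), where F is the Witt vector Frobenius and V the Verschiebung. -/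
/-!
Since `(ζ^i)^p = (ζ^p)^i` and `ζ^p` is a primitive `p`-th root of unity, the ghost components of
`F(∑ [ζ^i])`, namely `∑ (ζ^i)^(p^(n+1))`, are `0` for `n = 0` and `p` for `n ≥ 1`; these are
exactly the ghost components of `V(1)`. Ghost components determine Witt vectors once `p` is
invertible, so the identity holds over the fraction field of `R`, hence in `W(R)`, since
`W(R) → W(Frac R)` is injective.
-/

namespace WittVector

variable {p : ℕ} [Fact p.Prime]

theorem map_frobenius {R S : Type*} [CommRing R] [CommRing S] (f : R →+* S) (x : WittVector p R) :
    map f (frobenius x) = frobenius (map f x) := by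
  ext n
  simp only [map_coeff, coeff_frobenius, MvPolynomial.aeval_eq_eval₂Hom, MvPolynomial.map_eval₂Hom]
  exact MvPolynomial.eval₂Hom_congr (RingHom.ext_int _ _) rfl rfl

theorem ghostComponent_frobenius_sum_teichmuller {R ι : Type*} [CommRing R] (s : Finset ι)
    (a : ι → R) (n : ℕ) :
    ghostComponent n (frobenius (∑ i ∈ s, teichmuller p (a i))) = ∑ i ∈ s, a i ^ p ^ (n + 1) := by
  simp only [ghostComponent_frobenius, map_sum, ghostComponent_teichmuller]

theorem frobenius_sum_teichmuller_pow_eq_verschiebung_one {K : Type*} [CommRing K]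
    [Invertible (p : K)] (ζ : K) (hpow : ζ ^ p ^ 2 = 1)
    (hsum : ∑ i ∈ Finset.range p, (ζ ^ p) ^ i = 0) :
    frobenius (∑ i ∈ Finset.range p, teichmuller p (ζ ^ i)) = verschiebung (1 : WittVector p K) := by
  apply (ghostMap.bijective_of_invertible p K).1
  funext n
  simp only [ghostMap_apply, ghostComponent_frobenius_sum_teichmuller]
  cases n with
  | zero =>
    rw [ghostComponent_zero_verschiebung, ← hsum]
    simp only [zero_add, pow_one, ← pow_mul, mul_comm]
  | succ n =>
    have hroot (i : ℕ) : (ζ ^ i) ^ p ^ (n + 1 + 1) = 1 := by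
      rw [← pow_mul, show i * p ^ (n + 1 + 1) = p ^ 2 * (i * p ^ n) by ring, pow_mul, hpow, one_pow]
    simp only [hroot, Finset.sum_const, Finset.card_range, nsmul_eq_mul, mul_one,
      ghostComponent_verschiebung, map_one]

end WittVector

theorem stmt_15_general (p : ℕ) [Fact p.Prime] (R : Type*) [CommRing R] [IsDomain R]
    [CharZero R] (ζ : R) (hζ : IsPrimitiveRoot ζ (p ^ 2)) :
    WittVector.frobenius (∑ i ∈ Finset.range p, WittVector.teichmuller p (ζ ^ i)) =
      WittVector.verschiebung (1 : WittVector p R) := by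
  have hp : p.Prime := Fact.out
  have hinj : Function.Injective (algebraMap R (FractionRing R)) := IsFractionRing.injective _ _
  apply WittVector.map_injective _ hinj
  rw [WittVector.map_frobenius, WittVector.map_verschiebung, map_one, map_sum]
  simp only [WittVector.map_teichmuller, map_pow (algebraMap R (FractionRing R))]
  have hζK := hζ.map_of_injective hinj
  have : Invertible (p : FractionRing R) := invertibleOfNonzero (Nat.cast_ne_zero.2 hp.ne_zero)
  exact WittVector.frobenius_sum_teichmuller_pow_eq_verschiebung_one _ hζK.pow_eq_one
    ((hζK.pow (pow_pos hp.pos 2) (sq p)).geom_sum_eq_zero hp.one_lt)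

theorem stmt_15 (p : ℕ) [Fact p.Prime] (R : Type*) [CommRing R] [IsDomain R]
    [CharZero R] (ζ : R) (hζ : IsPrimitiveRoot ζ (p ^ 2))
    (hadj : Algebra.adjoin ℤ {ζ} = ⊤) :
    WittVector.frobenius (∑ i ∈ Finset.range p, WittVector.teichmuller p (ζ ^ i)) =
      WittVector.verschiebung (1 : WittVector p R) :=
  stmt_15_general p R ζ hζ
end

section
/- Let R be a commutative ring satisfying: for every r ∈ R there exists s ∈ R with s^p ≡ p·r (mod p²R). Then there exist x_1, x_p, x_{p²} ∈ R such that the ghost components satisfy x_1^p + p·x_p = 0 and x_1^{p²} + p·x_p^p + p²·x_{p²} = p; that is, (x_1, x_p, x_{p²}) ∈ W_{p²}(R) maps under Frobenius to V(1) ∈ W_p(R). -/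
lemma stmt_16_aux {R : Type*} [CommRing R] (a : R) (n : ℕ) :
    ∃ w : R, (1 + a) ^ n = 1 + n * a + a ^ 2 * w := by
  induction n with
  | zero => exact ⟨0, by simp⟩
  | succ n ih =>
    obtain ⟨w, hw⟩ := ih
    refine ⟨w + n + a * w, ?_⟩
    rw [pow_succ, hw]
    push_cast
    ring

theorem stmt_16 (p : ℕ) (hp : p.Prime) (R : Type*) [CommRing R]
    (h : ∀ r : R, ∃ s : R, ((p : R) ^ 2) ∣ s ^ p - p * r) :
    ∃ x₁ xp xp2 : R,
      x₁ ^ p + p * xp = 0 ∧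
        x₁ ^ p ^ 2 + p * xp ^ p + (p : R) ^ 2 * xp2 = p := by
  obtain ⟨s, u, hu⟩ : ∃ s u : R, s ^ p - (p : R) * (-1) = (p : R) ^ 2 * u := by
    obtain ⟨s, hs⟩ := h (-1)
    obtain ⟨u, hu⟩ := hs
    exact ⟨s, u, hu⟩
  have hs : s ^ p = (p : R) ^ 2 * u - p := by linear_combination hu
  obtain ⟨w, hw⟩ := stmt_16_aux (-((p : R) * u)) p
  have hX : ((1 : R) - (p : R) * u) ^ p = 1 + (p : R) ^ 2 * (u ^ 2 * w - u) := by
    have : (1 : R) - (p : R) * u = 1 + -((p : R) * u) := by ring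
    rw [this, hw]; ring
  have hpp : (p : R) ^ 2 * (p : R) ^ (p - 2) = (p : R) ^ p := by
    rw [← pow_add, Nat.add_sub_cancel' hp.two_le]
  have key : s ^ p ^ 2 = (-1 : R) ^ p * (p : R) ^ p * ((1 : R) - (p : R) * u) ^ p := by
    have h1 : (p : R) ^ 2 * u - p = (-(p : R)) * (1 - (p : R) * u) := by ring
    rw [pow_two, pow_mul, hs, h1, mul_pow, neg_pow]
  refine ⟨s, 1 - (p : R) * u,
    -((-1 : R) ^ p * (p : R) ^ (p - 2)) -
      ((-1 : R) ^ p * (p : R) ^ p + p) * (u ^ 2 * w - u), ?_, ?_⟩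
  · rw [hs]; ring
  · rw [key, hX]
    linear_combination (-(-1 : R) ^ p) * hpp
end
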